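/- Let d ≥ 1 and let G = (N, E) be a spatial network all of whose nodes lie in the unit cube [0,1]^d. Let φ_1, …, φ_{2^d} be the multilinear Lagrange basis functions of [0,1]^d, let α = (α_1, …, α_{2^d}) ∈ ℝ^{2^d}, and let v : N → ℝ be the restriction to N of Σ_i α_i φ_i. Then (a) |v|_L² ≤ 2^d d |α|² |1|_M², where |α| is the Euclidean norm of α and |1|_M² = Σ_{x∈N} (1/2) Σ_{y∼x} |x − y| is the total mass; and (b) |v|_M² = αᵀ Ξ α ≥ λ_min(Ξ) |α|², where Ξ_{ij} := Σ_{x∈N} (1/2) Σ_{y∼x} |x − y| φ_i(x) φ_j(x). Consequently, if λ_min(Ξ) > 0 then |v|_L² ≤ (2^d d |1|_M² / λ_min(Ξ)) |v|_M². -/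

import Mathlib

/-! Each `φ_b` is a product of factors with values in `[0,1]`, so it is `1`-Lipschitz for the
`ℓ¹` distance, hence `(φ_b x - φ_b y)² ≤ d |x - y|²`. Cauchy–Schwarz over the `2^d` corners gives
`(v x - v y)² ≤ 2^d d |α|² |x - y|²`, i.e. each edge term of `|v|_L²` is at most
`2^d d |α|²` times its mass term, which is (a). Expanding `v(x)²` in the basis gives `|v|_M² = αᵀ Ξ α`,
and normalising `α` to the unit sphere bounds this below by `λ_min(Ξ) |α|²`; (a) and (b) combine
to the last claim. -/

/-- The multilinear Lagrange basis function of the unit cube `[0,1]^d` associated with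
the corner `b : Fin d → Bool`: `φ_b(z) = ∏_j ℓ_j(z_j)` with `ℓ_j(s) = s` or `1 − s`. -/
noncomputable def lagrangeBasis (d : ℕ) (b : Fin d → Bool)
    (z : EuclideanSpace ℝ (Fin d)) : ℝ :=
  ∏ j, if b j then z j else 1 - z j

/-- The mass form `|v|_M² = Σ_{x∈N} (1/2) Σ_{y∼x} |x − y| v(x)²` of a spatial network. -/
noncomputable def massForm {d : ℕ} {ι : Type*} [Fintype ι]
    (p : ι → EuclideanSpace ℝ (Fin d)) (G : SimpleGraph ι) [DecidableRel G.Adj]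
    (v : ι → ℝ) : ℝ :=
  ∑ i, (1 / 2 : ℝ) * ∑ j ∈ Finset.univ.filter (fun j => G.Adj i j),
    dist (p i) (p j) * v i ^ 2

/-- The graph-Laplacian form `|v|_L² = Σ_{x∈N} (1/2) Σ_{y∼x} (v(x) − v(y))² / |x − y|`. -/
noncomputable def lapForm {d : ℕ} {ι : Type*} [Fintype ι]
    (p : ι → EuclideanSpace ℝ (Fin d)) (G : SimpleGraph ι) [DecidableRel G.Adj]
    (v : ι → ℝ) : ℝ :=
  ∑ i, (1 / 2 : ℝ) * ∑ j ∈ Finset.univ.filter (fun j => G.Adj i j),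
    (v i - v j) ^ 2 / dist (p i) (p j)

/-- The Gram-type matrix `Ξ_{bc} = Σ_{x∈N} (1/2) Σ_{y∼x} |x − y| φ_b(x) φ_c(x)`. -/
noncomputable def XiMatrix {d : ℕ} {ι : Type*} [Fintype ι]
    (p : ι → EuclideanSpace ℝ (Fin d)) (G : SimpleGraph ι) [DecidableRel G.Adj] :
    Matrix (Fin d → Bool) (Fin d → Bool) ℝ :=
  fun b c => ∑ i, (1 / 2 : ℝ) * ∑ j ∈ Finset.univ.filter (fun j => G.Adj i j),
    dist (p i) (p j) * (lagrangeBasis d b (p i) * lagrangeBasis d c (p i))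

/-- The smallest eigenvalue of a symmetric matrix, characterized as the infimum of the
Rayleigh quotient over the unit sphere. -/
noncomputable def lambdaMin {n : Type*} [Fintype n] (A : Matrix n n ℝ) : ℝ :=
  sInf {r : ℝ | ∃ β : n → ℝ, (∑ i, β i ^ 2) = 1 ∧ r = ∑ i, ∑ j, β i * A i j * β j}

open Finset

theorem abs_prod_sub_prod_le_sum_abs_sub {κ : Type*} (s : Finset κ) {a b : κ → ℝ}
    (ha : ∀ j ∈ s, |a j| ≤ 1) (hb : ∀ j ∈ s, |b j| ≤ 1) :
    |∏ j ∈ s, a j - ∏ j ∈ s, b j| ≤ ∑ j ∈ s, |a j - b j| := by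
  classical
  induction s using Finset.induction_on with
  | empty => simp
  | insert i s hi ih =>
    simp only [Finset.forall_mem_insert] at ha hb
    have hB : |∏ j ∈ s, b j| ≤ 1 := by
      rw [Finset.abs_prod]
      exact Finset.prod_le_one (fun j _ => abs_nonneg _) hb.2
    rw [Finset.prod_insert hi, Finset.prod_insert hi, Finset.sum_insert hi]
    calc |a i * ∏ j ∈ s, a j - b i * ∏ j ∈ s, b j|
        = |a i * (∏ j ∈ s, a j - ∏ j ∈ s, b j) + (a i - b i) * ∏ j ∈ s, b j| := by ring_nf
      _ ≤ |a i| * |∏ j ∈ s, a j - ∏ j ∈ s, b j| + |a i - b i| * |∏ j ∈ s, b j| := by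
        rw [← abs_mul, ← abs_mul]; exact abs_add_le _ _
      _ ≤ 1 * ∑ j ∈ s, |a j - b j| + |a i - b i| * 1 := by
        gcongr
        · exact ha.1
        · exact ih ha.2 hb.2
      _ = |a i - b i| + ∑ j ∈ s, |a j - b j| := by ring

theorem sum_abs_sub_sq_le_card_mul_dist_sq {d : ℕ} (x y : EuclideanSpace ℝ (Fin d)) :
    (∑ j, |x j - y j|) ^ 2 ≤ d * dist x y ^ 2 := by
  rw [EuclideanSpace.dist_eq, Real.sq_sqrt (by positivity)]
  simpa [Real.dist_eq, sq_abs] using sq_sum_le_card_mul_sum_sq (s := univ) (f := fun j => |x j - y j|)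

theorem abs_lagrangeBasis_sub_le {d : ℕ} (b : Fin d → Bool) {x y : EuclideanSpace ℝ (Fin d)}
    (hx : ∀ k, x k ∈ Set.Icc (0 : ℝ) 1) (hy : ∀ k, y k ∈ Set.Icc (0 : ℝ) 1) :
    |lagrangeBasis d b x - lagrangeBasis d b y| ≤ ∑ j, |x j - y j| := by
  have factor_abs_le_one : ∀ (z : EuclideanSpace ℝ (Fin d)), (∀ k, z k ∈ Set.Icc (0 : ℝ) 1) →
      ∀ j ∈ univ, |if b j then z j else 1 - z j| ≤ 1 := by
    intro z hz j _
    obtain ⟨h0, h1⟩ := hz j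
    split_ifs <;> rw [abs_le] <;> constructor <;> linarith
  refine (abs_prod_sub_prod_le_sum_abs_sub univ (factor_abs_le_one x hx)
    (factor_abs_le_one y hy)).trans_eq (sum_congr rfl fun j _ => ?_)
  split_ifs
  · rfl
  · rw [← abs_neg]; ring_nf

theorem sq_lagrangeBasis_sub_le {d : ℕ} (b : Fin d → Bool) {x y : EuclideanSpace ℝ (Fin d)}
    (hx : ∀ k, x k ∈ Set.Icc (0 : ℝ) 1) (hy : ∀ k, y k ∈ Set.Icc (0 : ℝ) 1) :
    (lagrangeBasis d b x - lagrangeBasis d b y) ^ 2 ≤ d * dist x y ^ 2 := by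
  rw [← sq_abs]
  exact (pow_le_pow_left₀ (abs_nonneg _) (abs_lagrangeBasis_sub_le b hx hy) 2).trans
    (sum_abs_sub_sq_le_card_mul_dist_sq x y)

theorem sq_sum_mul_lagrangeBasis_sub_le {d : ℕ} (α : (Fin d → Bool) → ℝ)
    {x y : EuclideanSpace ℝ (Fin d)}
    (hx : ∀ k, x k ∈ Set.Icc (0 : ℝ) 1) (hy : ∀ k, y k ∈ Set.Icc (0 : ℝ) 1) :
    (∑ b, α b * lagrangeBasis d b x - ∑ b, α b * lagrangeBasis d b y) ^ 2
      ≤ 2 ^ d * d * (∑ b, α b ^ 2) * dist x y ^ 2 := by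
  calc (∑ b, α b * lagrangeBasis d b x - ∑ b, α b * lagrangeBasis d b y) ^ 2
      = (∑ b, α b * (lagrangeBasis d b x - lagrangeBasis d b y)) ^ 2 := by
        simp only [mul_sub, sum_sub_distrib]
    _ ≤ (∑ b, α b ^ 2) * ∑ b, (lagrangeBasis d b x - lagrangeBasis d b y) ^ 2 :=
        sum_mul_sq_le_sq_mul_sq _ _ _
    _ ≤ (∑ b, α b ^ 2) * ∑ _b : Fin d → Bool, (d * dist x y ^ 2) := by
        gcongr with b; exact sq_lagrangeBasis_sub_le b hx hy
    _ = 2 ^ d * d * (∑ b, α b ^ 2) * dist x y ^ 2 := by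
        simp only [sum_const, card_univ, Fintype.card_fun, Fintype.card_bool, Fintype.card_fin,
          nsmul_eq_mul]
        push_cast; ring

section SpatialNetwork

variable {d : ℕ} {ι : Type*} [Fintype ι] (p : ι → EuclideanSpace ℝ (Fin d))
  (G : SimpleGraph ι) [DecidableRel G.Adj]

noncomputable def nodeMass (i : ι) : ℝ :=
  (1 / 2 : ℝ) * ∑ j ∈ univ.filter (fun j => G.Adj i j), dist (p i) (p j)

theorem nodeMass_nonneg (i : ι) : 0 ≤ nodeMass p G i := by
  unfold nodeMass; positivity

theorem massForm_eq_sum_nodeMass_mul (v : ι → ℝ) :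
    massForm p G v = ∑ i, nodeMass p G i * v i ^ 2 := by
  simp only [massForm, nodeMass, sum_mul, mul_assoc]

theorem XiMatrix_apply (b c : Fin d → Bool) :
    XiMatrix p G b c = ∑ i, nodeMass p G i * (lagrangeBasis d b (p i) * lagrangeBasis d c (p i)) := by
  simp only [XiMatrix, nodeMass, sum_mul, mul_assoc]

theorem massForm_nonneg (v : ι → ℝ) : 0 ≤ massForm p G v := by
  rw [massForm_eq_sum_nodeMass_mul]
  exact sum_nonneg fun i _ => mul_nonneg (nodeMass_nonneg p G i) (sq_nonneg _)

theorem lapForm_le_mul_massForm_one {v : ι → ℝ} {K : ℝ}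
    (hv : ∀ i j, G.Adj i j → (v i - v j) ^ 2 ≤ K * dist (p i) (p j) ^ 2) :
    lapForm p G v ≤ K * massForm p G (fun _ => 1) := by
  simp only [massForm, lapForm, one_pow, mul_one, mul_sum]
  refine sum_le_sum fun i _ => sum_le_sum fun j hj => ?_
  rw [mul_left_comm]
  gcongr
  obtain hpos | hzero := (dist_nonneg (x := p i) (y := p j)).lt_or_eq
  · rw [div_le_iff₀ hpos, mul_assoc, ← sq]
    exact hv i j (mem_filter.mp hj).2
  · -- coincident endpoints contribute `_ / 0 = 0`
    rw [← hzero]; simp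

theorem massForm_sum_mul_lagrangeBasis_eq (α : (Fin d → Bool) → ℝ) :
    massForm p G (fun i => ∑ b, α b * lagrangeBasis d b (p i))
      = ∑ b, ∑ c, α b * XiMatrix p G b c * α c := by
  simp only [massForm_eq_sum_nodeMass_mul, XiMatrix_apply, sq, mul_sum, sum_mul]
  rw [sum_comm]
  refine sum_congr rfl fun b _ => ?_
  rw [sum_comm]
  refine sum_congr rfl fun c _ => sum_congr rfl fun i _ => by ring

end SpatialNetwork

section RayleighQuotient

variable {n : Type*} [Fintype n] (A : Matrix n n ℝ)

theorem neg_sum_sum_abs_le_of_sum_sq_eq_one {β : n → ℝ} (hβ : ∑ i, β i ^ 2 = 1) :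
    -∑ i, ∑ j, |A i j| ≤ ∑ i, ∑ j, β i * A i j * β j := by
  have abs_le_one : ∀ i, |β i| ≤ 1 := fun i => by
    rw [← sq_le_one_iff_abs_le_one, ← hβ]
    exact single_le_sum (f := fun j => β j ^ 2) (fun j _ => sq_nonneg _) (mem_univ i)
  rw [← sum_neg_distrib]
  refine sum_le_sum fun i _ => ?_
  rw [← sum_neg_distrib]
  refine sum_le_sum fun j _ => neg_le_of_abs_le ?_
  rw [abs_mul, abs_mul]
  calc |β i| * |A i j| * |β j| ≤ 1 * |A i j| * 1 := by
        gcongr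
        · exact abs_le_one i
        · exact abs_le_one j
    _ = |A i j| := by ring

theorem lambdaMin_le_of_sum_sq_eq_one {β : n → ℝ} (hβ : ∑ i, β i ^ 2 = 1) :
    lambdaMin A ≤ ∑ i, ∑ j, β i * A i j * β j := by
  refine csInf_le ⟨-∑ i, ∑ j, |A i j|, ?_⟩ ⟨β, hβ, rfl⟩
  rintro r ⟨γ, hγ, rfl⟩
  exact neg_sum_sum_abs_le_of_sum_sq_eq_one A hγ

theorem lambdaMin_mul_sum_sq_le (α : n → ℝ) :
    lambdaMin A * ∑ i, α i ^ 2 ≤ ∑ i, ∑ j, α i * A i j * α j := by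
  set s := ∑ i, α i ^ 2
  obtain hs | hs := (show 0 ≤ s by positivity).lt_or_eq
  · set c := (√s)⁻¹
    have hc : c ^ 2 = s⁻¹ := by rw [inv_pow, Real.sq_sqrt hs.le]
    have hunit : ∑ i, (c * α i) ^ 2 = 1 := by
      simp only [mul_pow, ← mul_sum, hc]
      exact inv_mul_cancel₀ hs.ne'
    have hquad : ∑ i, ∑ j, c * α i * A i j * (c * α j)
        = s⁻¹ * ∑ i, ∑ j, α i * A i j * α j := by
      simp only [← hc, mul_sum]
      exact sum_congr rfl fun i _ => sum_congr rfl fun j _ => by ring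
    have := lambdaMin_le_of_sum_sq_eq_one A hunit
    rw [hquad, ← div_eq_inv_mul, le_div_iff₀ hs] at this
    exact this
  · have hα : ∀ i, α i = 0 := fun i =>
      pow_eq_zero_iff two_ne_zero |>.mp <|
        (sum_eq_zero_iff_of_nonneg fun i _ => sq_nonneg (α i)).mp hs.symm i (mem_univ i)
    simp [← hs, hα]

end RayleighQuotient

theorem stmt8_general {d : ℕ} {ι : Type*} [Fintype ι]
    (p : ι → EuclideanSpace ℝ (Fin d)) (G : SimpleGraph ι) [DecidableRel G.Adj]
    (hcube : ∀ i, ∀ k : Fin d, p i k ∈ Set.Icc (0 : ℝ) 1)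
    (α : (Fin d → Bool) → ℝ) (v : ι → ℝ)
    (hv : ∀ i, v i = ∑ b : Fin d → Bool, α b * lagrangeBasis d b (p i)) :
    lapForm p G v ≤ 2 ^ d * d * (∑ b : Fin d → Bool, α b ^ 2) * massForm p G (fun _ => 1) ∧
    massForm p G v = ∑ b : Fin d → Bool, ∑ c : Fin d → Bool, α b * XiMatrix p G b c * α c ∧
    lambdaMin (XiMatrix p G) * (∑ b : Fin d → Bool, α b ^ 2) ≤ massForm p G v ∧
    (0 < lambdaMin (XiMatrix p G) →
      lapForm p G v ≤
        (2 ^ d * d * massForm p G (fun _ => 1) / lambdaMin (XiMatrix p G)) *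
          massForm p G v) := by
  obtain rfl : v = fun i => ∑ b, α b * lagrangeBasis d b (p i) := funext hv
  have hlap := lapForm_le_mul_massForm_one p G fun i j _ =>
    sq_sum_mul_lagrangeBasis_sub_le α (hcube i) (hcube j)
  have hquad := massForm_sum_mul_lagrangeBasis_eq p G α
  have hlam := hquad ▸ lambdaMin_mul_sum_sq_le (XiMatrix p G) α
  refine ⟨hlap, hquad, hlam, fun hpos => ?_⟩
  have := massForm_nonneg p G fun _ => 1
  calc _ ≤ _ := hlap
    _ = (2 ^ d * d * massForm p G (fun _ => 1) / lambdaMin (XiMatrix p G)) *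
          (lambdaMin (XiMatrix p G) * ∑ b, α b ^ 2) := by field_simp
    _ ≤ _ := by gcongr

/-- the unit-cell inequalities at the heart of the inverse inequality
(Lemma 5.2): for a network in `[0,1]^d` and `v` the restriction of `Σ_b α_b φ_b`,
(a) `|v|_L² ≤ 2^d d |α|² |1|_M²`, (b) `|v|_M² = αᵀ Ξ α ≥ λ_min(Ξ) |α|²`, and
consequently `|v|_L² ≤ (2^d d |1|_M² / λ_min(Ξ)) |v|_M²` when `λ_min(Ξ) > 0`. -/
theorem stmt8 {d : ℕ} (hd : 1 ≤ d) {ι : Type*} [Fintype ι]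
    (p : ι → EuclideanSpace ℝ (Fin d)) (G : SimpleGraph ι) [DecidableRel G.Adj]
    (hp : ∀ i j, G.Adj i j → p i ≠ p j)
    (hcube : ∀ i, ∀ k : Fin d, p i k ∈ Set.Icc (0 : ℝ) 1)
    (α : (Fin d → Bool) → ℝ) (v : ι → ℝ)
    (hv : ∀ i, v i = ∑ b : Fin d → Bool, α b * lagrangeBasis d b (p i)) :
    lapForm p G v ≤ 2 ^ d * d * (∑ b : Fin d → Bool, α b ^ 2) * massForm p G (fun _ => 1) ∧
    massForm p G v = ∑ b : Fin d → Bool, ∑ c : Fin d → Bool, α b * XiMatrix p G b c * α c ∧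
    lambdaMin (XiMatrix p G) * (∑ b : Fin d → Bool, α b ^ 2) ≤ massForm p G v ∧
    (0 < lambdaMin (XiMatrix p G) →
      lapForm p G v ≤
        (2 ^ d * d * massForm p G (fun _ => 1) / lambdaMin (XiMatrix p G)) *
          massForm p G v) :=
  stmt8_general p G hcube α v hv
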